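/- (Minimum value bound under oversmoothing) Let $t\in(1,2)$, and suppose the two-sided Lipschitz condition with constant $L$ holds on a shrinkage-closed domain $D$. Let $x^+\in D$ with $\|x^+\|_{k_t}\le\varrho$ and $\|g^{obs}-F(x^+)\|_Y\le\delta$. Then every minimizer $\hat x_\alpha$ of the Tikhonov functional satisfies $\tfrac12\|g^{obs}-F(\hat x_\alpha)\|_Y^2+\alpha\|\hat x_\alpha\|_{\bar r,1}\le\delta^2+C_t\varrho^t\alpha^{2-t}$ for all $\alpha>0$, with $C_t$ depending only on $t$ and $L$. -/

import Mathlib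

open scoped ENNReal
noncomputable section

variable {Λ : Type*}

/-- Weighted `ℓ^p` quasi-norm (value in `ℝ≥0∞`). -/
def wnorm (ω : Λ → ℝ) (p : ℝ) (x : Λ → ℝ) : ℝ≥0∞ :=
  (∑' j, ENNReal.ofReal (ω j ^ p * |x j| ^ p)) ^ (1 / p)

/-- The interpolating weights `(ω_t)_j = (a_j^{2t-2} r_j^{2-t})^{1/t}`. -/
def omegaWeight (a r : Λ → ℝ) (t : ℝ) : Λ → ℝ :=
  fun j => (a j ^ (2 * t - 2) * r j ^ (2 - t)) ^ (1 / t)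

/-- Weighted `ℓ¹` norm `‖x‖_{r,1} = ∑ r_j |x_j|`. -/
def rnorm1 (r : Λ → ℝ) (x : Λ → ℝ) : ℝ≥0∞ := ∑' j, ENNReal.ofReal (r j * |x j|)

/-- Weighted `ℓ²` norm `‖x‖_{a,2} = (∑ a_j² x_j²)^{1/2}`. -/
def anorm2 (a : Λ → ℝ) (x : Λ → ℝ) : ℝ≥0∞ :=
  (∑' j, ENNReal.ofReal (a j ^ 2 * x j ^ 2)) ^ ((1 : ℝ) / 2)

/-- The sum `∑_j a_j⁻² r_j² 𝟙_{a_j⁻² r_j α < |x_j|}`. -/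
def kSum (a r : Λ → ℝ) (α : ℝ) (x : Λ → ℝ) : ℝ≥0∞ :=
  ∑' j, ENNReal.ofReal (if r j * α / a j ^ 2 < |x j| then r j ^ 2 / a j ^ 2 else 0)

/-- The weak quasi-norm `‖x‖_{k_t} = sup_{α>0} α (kSum α x)^{1/t}`. -/
def knorm (a r : Λ → ℝ) (t : ℝ) (x : Λ → ℝ) : ℝ≥0∞ :=
  ⨆ α ∈ Set.Ioi (0 : ℝ), ENNReal.ofReal α * (kSum a r α x) ^ (1 / t)

/-- Hard thresholding operator. -/
def Tthresh (a r : Λ → ℝ) (α : ℝ) (x : Λ → ℝ) : Λ → ℝ :=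
  fun j => if r j * α / a j ^ 2 < |x j| then x j else 0

/-! The minimizer is compared with the hard thresholding `z = T_α x⁺`, which lies in `D`
because `D` is closed under coordinate shrinkage. With `s_j = a_j² |x⁺_j| / r_j` and
`w_j = r_j² / a_j²`, the bound `‖x⁺‖_{k_t} ≤ ρ` is the weak-type estimate
`∑_{s_j > u} w_j ≤ (ρ / u)^t` for all `u > 0`. Splitting `s` into dyadic shells turns it
into `‖x⁺ - z‖²_{a,2} = ∑_{s_j ≤ α} w_j s_j² ≲ ρ^t α^{2-t}` (a geometric series as `t < 2`)
and `‖z‖_{r,1} = ∑_{s_j > α} w_j s_j ≲ ρ^t α^{1-t}` (as `t > 1`). The upper Lipschitz bound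
puts the data misfit at `z` below `δ + L ‖x⁺ - z‖_{a,2}`, and minimality of `x̂_α` concludes. -/

lemma tsum_ofReal_mul_geometric {c q : ℝ} (hc : 0 ≤ c) (hq0 : 0 ≤ q) (hq1 : q < 1) :
    ∑' k : ℕ, ENNReal.ofReal (c * q ^ k) = ENNReal.ofReal (c * (1 - q)⁻¹) := by
  rw [← ENNReal.ofReal_tsum_of_nonneg (fun k => by positivity)
    ((summable_geometric_of_lt_one hq0 hq1).mul_left c),
    tsum_mul_left, tsum_geometric_of_lt_one hq0 hq1]

lemma two_rpow_lt_one {x : ℝ} (hx : x < 0) : (2 : ℝ) ^ x < 1 :=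
  Real.rpow_lt_one_of_one_lt_of_neg one_lt_two hx

lemma exists_div_two_pow_succ_lt_le {β s : ℝ} (hs : 0 < s) (hsβ : s ≤ β) :
    ∃ k : ℕ, β / 2 ^ (k + 1) < s ∧ s ≤ β / 2 ^ k := by
  have hβ := hs.trans_le hsβ
  obtain ⟨k, hk₁, hk₂⟩ := exists_nat_pow_near_of_lt_one (div_pos hs hβ)
    ((div_le_one hβ).mpr hsβ) (one_half_pos (α := ℝ)) one_half_lt_one
  rw [one_div_pow, lt_div_iff₀ hβ, one_div_mul_eq_div] at hk₁
  rw [one_div_pow, div_le_iff₀ hβ, one_div_mul_eq_div] at hk₂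
  exact ⟨k, hk₁, hk₂⟩

lemma exists_mul_two_pow_lt_le {β s : ℝ} (hβ : 0 < β) (hβs : β < s) :
    ∃ k : ℕ, β * 2 ^ k < s ∧ s ≤ β * 2 ^ (k + 1) := by
  obtain ⟨n, hn₁, hn₂⟩ := exists_mem_Ioc_zpow (div_pos (hβ.trans hβs) hβ) one_lt_two
  have hn : 0 ≤ n := by
    by_contra! hneg
    have := zpow_le_one_of_nonpos₀ (one_le_two (α := ℝ)) (show n + 1 ≤ 0 by omega)
    linarith [(one_lt_div hβ).mpr hβs]
  lift n to ℕ using hn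
  rw [lt_div_iff₀ hβ, zpow_natCast, mul_comm] at hn₁
  rw [div_le_iff₀ hβ, zpow_add_one₀ two_ne_zero, zpow_natCast, ← pow_succ, mul_comm] at hn₂
  exact ⟨n, hn₁, hn₂⟩

lemma div_rpow_mul_rpow {ρ u c t p : ℝ} (hρ : 0 ≤ ρ) (hu : 0 < u) (hc : 0 ≤ c) :
    (ρ / u) ^ t * (c * u) ^ p = c ^ p * ρ ^ t * u ^ (p - t) := by
  rw [Real.div_rpow hρ hu.le, Real.mul_rpow hc hu.le, Real.rpow_sub hu]
  field_simp

lemma mul_two_pow_rpow {β : ℝ} (hβ : 0 ≤ β) (x : ℝ) (k : ℕ) :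
    (β * 2 ^ k) ^ x = β ^ x * ((2 : ℝ) ^ x) ^ k := by
  rw [Real.mul_rpow hβ (by positivity), Real.rpow_pow_comm zero_le_two]

lemma div_two_pow_rpow {β : ℝ} (hβ : 0 ≤ β) (x : ℝ) (k : ℕ) :
    (β / 2 ^ k) ^ x = β ^ x * ((2 : ℝ) ^ (-x)) ^ k := by
  rw [Real.div_rpow hβ (by positivity), ← Real.rpow_pow_comm zero_le_two,
    Real.rpow_neg zero_le_two, inv_pow, div_eq_mul_inv]

section WeakType

variable {ι : Type*} {w : ι → ℝ≥0∞} {s : ι → ℝ} {t ρ β p : ℝ}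

lemma tsum_le_tsum_of_weak_bound {g : ι → ℝ≥0∞}
    (hK : ∀ u, 0 < u → (∑' j, if u < s j then w j else 0) ≤ ENNReal.ofReal ((ρ / u) ^ t))
    {u h : ℕ → ℝ} (hu : ∀ k, 0 < u k) (hh : ∀ k, 0 ≤ h k)
    (hcover : ∀ j, g j ≠ 0 → ∃ k, u k < s j ∧ g j ≤ w j * ENNReal.ofReal (h k)) :
    ∑' j, g j ≤ ∑' k, ENNReal.ofReal ((ρ / u k) ^ t * h k) :=
  calc ∑' j, g j
      ≤ ∑' j, ∑' k, (if u k < s j then w j else 0) * ENNReal.ofReal (h k) := by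
        refine ENNReal.tsum_le_tsum fun j => ?_
        by_cases hg : g j = 0
        · simp [hg]
        obtain ⟨k, hk, hgk⟩ := hcover j hg
        refine hgk.trans (le_of_eq_of_le ?_ (ENNReal.le_tsum k))
        rw [if_pos hk]
    _ = ∑' k, (∑' j, if u k < s j then w j else 0) * ENNReal.ofReal (h k) := by
        rw [ENNReal.tsum_comm]
        simp only [ENNReal.tsum_mul_right]
    _ ≤ ∑' k, ENNReal.ofReal ((ρ / u k) ^ t * h k) := by
        refine ENNReal.tsum_le_tsum fun k => ?_
        rw [ENNReal.ofReal_mul' (hh k)]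
        gcongr
        exact hK _ (hu k)

lemma tsum_ite_le_le_of_weak_bound
    (hK : ∀ u, 0 < u → (∑' j, if u < s j then w j else 0) ≤ ENNReal.ofReal ((ρ / u) ^ t))
    (hρ : 0 ≤ ρ) (hβ : 0 < β) (hp : 0 < p) (htp : t < p) (hs : ∀ j, 0 ≤ s j) :
    (∑' j, if s j ≤ β then w j * ENNReal.ofReal (s j ^ p) else 0)
      ≤ ENNReal.ofReal (2 ^ t / (1 - 2 ^ (t - p)) * ρ ^ t * β ^ (p - t)) := by
  have hshell (k : ℕ) : (ρ / (β / 2 ^ (k + 1))) ^ t * (β / 2 ^ k) ^ p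
      = 2 ^ t * ρ ^ t * β ^ (p - t) * ((2 : ℝ) ^ (t - p)) ^ k := by
    have h2 : β / 2 ^ k = 2 * (β / 2 ^ (k + 1)) := by rw [pow_succ]; field_simp
    have h2p : (2 : ℝ) ^ p * 2 ^ (t - p) = 2 ^ t := by
      rw [← Real.rpow_add two_pos, add_sub_cancel]
    rw [h2, div_rpow_mul_rpow hρ (by positivity) zero_le_two, div_two_pow_rpow hβ.le, neg_sub,
      pow_succ, ← h2p]
    ring
  refine (tsum_le_tsum_of_weak_bound hK (u := fun k => β / 2 ^ (k + 1))
    (h := fun k => (β / 2 ^ k) ^ p) (fun k => by positivity) (fun k => by positivity)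
    fun j hj => ?_).trans_eq ?_
  · have hsβ : s j ≤ β := by by_contra h; simp [h] at hj
    have hsj : 0 < s j := by
      refine (hs j).lt_of_ne fun h => ?_
      simp [← h, Real.zero_rpow hp.ne'] at hj
    obtain ⟨k, hk₁, hk₂⟩ := exists_div_two_pow_succ_lt_le hsj hsβ
    refine ⟨k, hk₁, ?_⟩
    rw [if_pos hsβ]
    gcongr
  · simp only [hshell]
    rw [tsum_ofReal_mul_geometric (by positivity) (by positivity) (two_rpow_lt_one (by linarith))]
    ring_nf

lemma tsum_ite_lt_le_of_weak_bound
    (hK : ∀ u, 0 < u → (∑' j, if u < s j then w j else 0) ≤ ENNReal.ofReal ((ρ / u) ^ t))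
    (hρ : 0 ≤ ρ) (hβ : 0 < β) (hp : 0 ≤ p) (hpt : p < t) :
    (∑' j, if β < s j then w j * ENNReal.ofReal (s j ^ p) else 0)
      ≤ ENNReal.ofReal (2 ^ p / (1 - 2 ^ (p - t)) * ρ ^ t * β ^ (p - t)) := by
  have hshell (k : ℕ) : (ρ / (β * 2 ^ k)) ^ t * (β * 2 ^ (k + 1)) ^ p
      = 2 ^ p * ρ ^ t * β ^ (p - t) * ((2 : ℝ) ^ (p - t)) ^ k := by
    rw [pow_succ, ← mul_assoc, mul_comm _ (2 : ℝ),
      div_rpow_mul_rpow hρ (by positivity) zero_le_two, mul_two_pow_rpow hβ.le]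
    ring
  refine (tsum_le_tsum_of_weak_bound hK (u := fun k => β * 2 ^ k)
    (h := fun k => (β * 2 ^ (k + 1)) ^ p) (fun k => by positivity) (fun k => by positivity)
    fun j hj => ?_).trans_eq ?_
  · have hβs : β < s j := by by_contra h; simp [h] at hj
    obtain ⟨k, hk₁, hk₂⟩ := exists_mul_two_pow_lt_le hβ hβs
    refine ⟨k, hk₁, ?_⟩
    rw [if_pos hβs]
    gcongr
    exact (hβ.trans hβs).le
  · simp only [hshell]
    rw [tsum_ofReal_mul_geometric (by positivity) (by positivity) (two_rpow_lt_one (by linarith))]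
    ring_nf

end WeakType

lemma half_mul_norm_sub_sq_le {E : Type*} [SeminormedAddCommGroup E] (a b c : E) :
    1 / 2 * ‖a - c‖ ^ 2 ≤ ‖a - b‖ ^ 2 + ‖b - c‖ ^ 2 := by
  nlinarith [norm_sub_le_norm_sub_add_norm_sub a b c, norm_nonneg (a - c),
    sq_nonneg (‖a - b‖ - ‖b - c‖)]

lemma sq_le_of_ofReal_le_mul {c L M : ℝ} {e : ℝ≥0∞} (hc : 0 ≤ c) (hL : 0 ≤ L) (hM : 0 ≤ M)
    (h : ENNReal.ofReal c ≤ ENNReal.ofReal L * e) (he : e ^ 2 ≤ ENNReal.ofReal M) :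
    c ^ 2 ≤ L ^ 2 * M := by
  rw [← ENNReal.ofReal_le_ofReal_iff (by positivity), ENNReal.ofReal_pow hc,
    ENNReal.ofReal_mul (by positivity), ENNReal.ofReal_pow hL]
  calc ENNReal.ofReal c ^ 2 ≤ (ENNReal.ofReal L * e) ^ 2 := by gcongr
    _ = ENNReal.ofReal L ^ 2 * e ^ 2 := mul_pow _ _ _
    _ ≤ ENNReal.ofReal L ^ 2 * ENNReal.ofReal M := by gcongr

lemma lt_abs_iff_lt_div {a r u x : ℝ} (ha : 0 < a) (hr : 0 < r) :
    r * u / a ^ 2 < |x| ↔ u < a ^ 2 * |x| / r := by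
  rw [div_lt_iff₀ (by positivity), lt_div_iff₀ hr, mul_comm r, mul_comm |x|]

lemma abs_Tthresh_le (a r : Λ → ℝ) (α : ℝ) (x : Λ → ℝ) (j : Λ) :
    |Tthresh a r α x j| ≤ |x j| := by
  unfold Tthresh
  split_ifs <;> simp

lemma anorm2_sq (a x : Λ → ℝ) :
    anorm2 a x ^ 2 = ∑' j, ENNReal.ofReal (a j ^ 2 * x j ^ 2) := by
  rw [anorm2, ← ENNReal.rpow_natCast, ← ENNReal.rpow_mul]
  norm_num

section Thresholding

variable {a r x : Λ → ℝ} {t ρ α : ℝ}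

lemma kSum_eq_tsum_ite (ha : ∀ j, 0 < a j) (hr : ∀ j, 0 < r j) (u : ℝ) :
    kSum a r u x = ∑' j,
      if u < a j ^ 2 * |x j| / r j then ENNReal.ofReal (r j ^ 2 / a j ^ 2) else 0 := by
  refine tsum_congr fun j => ?_
  simp only [apply_ite ENNReal.ofReal, ENNReal.ofReal_zero, lt_abs_iff_lt_div (ha j) (hr j)]

lemma kSum_le_of_knorm_le (ht : 0 < t) (hρ : 0 ≤ ρ) (hx : knorm a r t x ≤ ENNReal.ofReal ρ)
    {u : ℝ} (hu : 0 < u) : kSum a r u x ≤ ENNReal.ofReal ((ρ / u) ^ t) := by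
  have hu' : ENNReal.ofReal u * kSum a r u x ^ (1 / t) ≤ ENNReal.ofReal ρ :=
    (le_iSup₂ (f := fun u (_ : u ∈ Set.Ioi (0 : ℝ)) =>
      ENNReal.ofReal u * kSum a r u x ^ (1 / t)) u hu).trans hx
  have hroot : kSum a r u x ^ (1 / t) ≤ ENNReal.ofReal (ρ / u) := by
    rw [ENNReal.ofReal_div_of_pos hu, ENNReal.le_div_iff_mul_le (by simp [hu]) (by simp),
      mul_comm]
    exact hu'
  calc kSum a r u x = (kSum a r u x ^ (1 / t)) ^ t := by
        rw [← ENNReal.rpow_mul, one_div_mul_cancel ht.ne', ENNReal.rpow_one]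
    _ ≤ ENNReal.ofReal (ρ / u) ^ t := by gcongr
    _ = ENNReal.ofReal ((ρ / u) ^ t) := ENNReal.ofReal_rpow_of_nonneg (by positivity) ht.le

lemma weak_bound_of_knorm_le (ha : ∀ j, 0 < a j) (hr : ∀ j, 0 < r j) (ht : 0 < t)
    (hρ : 0 ≤ ρ) (hx : knorm a r t x ≤ ENNReal.ofReal ρ) (u : ℝ) (hu : 0 < u) :
    (∑' j, if u < a j ^ 2 * |x j| / r j then ENNReal.ofReal (r j ^ 2 / a j ^ 2) else 0)
      ≤ ENNReal.ofReal ((ρ / u) ^ t) :=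
  kSum_eq_tsum_ite ha hr u ▸ kSum_le_of_knorm_le ht hρ hx hu

lemma anorm2_sub_Tthresh_sq_le (ha : ∀ j, 0 < a j) (hr : ∀ j, 0 < r j) (ht₀ : 0 < t)
    (ht₂ : t < 2) (hρ : 0 ≤ ρ) (hα : 0 < α) (hx : knorm a r t x ≤ ENNReal.ofReal ρ) :
    anorm2 a (x - Tthresh a r α x) ^ 2
      ≤ ENNReal.ofReal (2 ^ t / (1 - 2 ^ (t - 2)) * ρ ^ t * α ^ (2 - t)) := by
  rw [anorm2_sq]
  refine le_of_eq_of_le (tsum_congr fun j => ?_) (tsum_ite_le_le_of_weak_bound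
    (weak_bound_of_knorm_le ha hr ht₀ hρ hx) hρ hα two_pos ht₂ fun j => ?_)
  · have ha' := (ha j).ne'
    have hr' := (hr j).ne'
    simp only [Pi.sub_apply, Tthresh, lt_abs_iff_lt_div (ha j) (hr j)]
    split_ifs with h₁ h₂ h₂
    · exact absurd h₂ (not_le.2 h₁)
    · simp
    · rw [sub_zero, Real.rpow_two, ← ENNReal.ofReal_mul (by positivity)]
      congr 1
      field_simp
      exact (sq_abs _).symm
    · exact absurd (not_lt.1 h₁) h₂
  · exact div_nonneg (by positivity) (hr j).le

lemma rnorm1_Tthresh_le (ha : ∀ j, 0 < a j) (hr : ∀ j, 0 < r j) (ht : 1 < t)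
    (hρ : 0 ≤ ρ) (hα : 0 < α) (hx : knorm a r t x ≤ ENNReal.ofReal ρ) :
    rnorm1 r (Tthresh a r α x)
      ≤ ENNReal.ofReal (2 / (1 - 2 ^ (1 - t)) * ρ ^ t * α ^ (1 - t)) := by
  refine le_of_eq_of_le (tsum_congr fun j => ?_) ((tsum_ite_lt_le_of_weak_bound
    (weak_bound_of_knorm_le ha hr (by linarith) hρ hx) hρ hα zero_le_one ht).trans_eq ?_)
  · have ha' := (ha j).ne'
    have hr' := (hr j).ne'
    simp only [Tthresh, lt_abs_iff_lt_div (ha j) (hr j)]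
    split_ifs
    · rw [Real.rpow_one, ← ENNReal.ofReal_mul (by positivity)]
      congr 1
      field_simp
    · simp
  · rw [Real.rpow_one]

end Thresholding

theorem stmt17 {Y : Type*} [NormedAddCommGroup Y]
    (t L : ℝ) (ht : t ∈ Set.Ioo (1:ℝ) 2) (hL : 0 < L) :
    ∃ Ct > (0:ℝ), ∀ (a r : Λ → ℝ), (∀ j, 0 < a j) → (∀ j, 0 < r j) →
      ∀ (D : Set (Λ → ℝ)) (F : (Λ → ℝ) → Y),
      (∀ x₁ ∈ D, ∀ x₂ ∈ D, anorm2 a (x₁ - x₂) ≤ ENNReal.ofReal (L * ‖F x₁ - F x₂‖)) →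
      (∀ x₁ ∈ D, ∀ x₂ ∈ D,
        ENNReal.ofReal ‖F x₁ - F x₂‖ ≤ ENNReal.ofReal L * anorm2 a (x₁ - x₂)) →
      (∀ x ∈ D, ∀ z : Λ → ℝ, (∀ j, |z j| ≤ |x j|) → z ∈ D) →
      ∀ ρ > (0:ℝ), ∀ xplus ∈ D, knorm a r t xplus ≤ ENNReal.ofReal ρ →
      ∀ δ ≥ (0:ℝ), ∀ gobs : Y, ‖gobs - F xplus‖ ≤ δ →
      ∀ α > (0:ℝ), ∀ xh ∈ D,
        (∀ z ∈ D, ENNReal.ofReal ((1 / 2) * ‖gobs - F xh‖ ^ 2) +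
            ENNReal.ofReal α * rnorm1 r xh ≤
          ENNReal.ofReal ((1 / 2) * ‖gobs - F z‖ ^ 2) + ENNReal.ofReal α * rnorm1 r z) →
        ENNReal.ofReal ((1 / 2) * ‖gobs - F xh‖ ^ 2) + ENNReal.ofReal α * rnorm1 r xh ≤
          ENNReal.ofReal (δ ^ 2 + Ct * ρ ^ t * α ^ (2 - t)) := by
  obtain ⟨ht₁, ht₂⟩ := ht
  have hq₁ : 0 < 1 - (2 : ℝ) ^ (t - 2) := sub_pos.2 (two_rpow_lt_one (by linarith))
  have hq₂ : 0 < 1 - (2 : ℝ) ^ (1 - t) := sub_pos.2 (two_rpow_lt_one (by linarith))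
  set C₁ : ℝ := 2 ^ t / (1 - 2 ^ (t - 2))
  set C₂ : ℝ := 2 / (1 - 2 ^ (1 - t))
  refine ⟨L ^ 2 * C₁ + C₂, by positivity, ?_⟩
  intro a r ha hr D F _ hF hshrink ρ hρ xplus hxD hx δ _ gobs hgobs α hα xh _ hmin
  set z := Tthresh a r α xplus
  have hzD : z ∈ D := hshrink xplus hxD z (abs_Tthresh_le a r α xplus)
  have hfit : ‖F xplus - F z‖ ^ 2 ≤ L ^ 2 * (C₁ * ρ ^ t * α ^ (2 - t)) :=
    sq_le_of_ofReal_le_mul (norm_nonneg _) hL.le (by positivity) (hF xplus hxD z hzD)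
      (anorm2_sub_Tthresh_sq_le ha hr (by linarith) ht₂ hρ.le hα hx)
  have hdata : 1 / 2 * ‖gobs - F z‖ ^ 2 ≤ δ ^ 2 + L ^ 2 * (C₁ * ρ ^ t * α ^ (2 - t)) :=
    (half_mul_norm_sub_sq_le gobs (F xplus) (F z)).trans (by gcongr)
  have hpen : ENNReal.ofReal α * rnorm1 r z ≤ ENNReal.ofReal (C₂ * ρ ^ t * α ^ (2 - t)) := by
    calc ENNReal.ofReal α * rnorm1 r z
        ≤ ENNReal.ofReal α * ENNReal.ofReal (C₂ * ρ ^ t * α ^ (1 - t)) := by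
          gcongr
          exact rnorm1_Tthresh_le ha hr ht₁ hρ.le hα hx
      _ = ENNReal.ofReal (C₂ * ρ ^ t * α ^ (2 - t)) := by
          rw [← ENNReal.ofReal_mul hα.le, show 2 - t = 1 - t + 1 by ring,
            Real.rpow_add_one hα.ne']
          ring_nf
  calc _ ≤ _ := hmin z hzD
    _ ≤ ENNReal.ofReal (δ ^ 2 + L ^ 2 * (C₁ * ρ ^ t * α ^ (2 - t)))
          + ENNReal.ofReal (C₂ * ρ ^ t * α ^ (2 - t)) := by gcongr
    _ = ENNReal.ofReal (δ ^ 2 + (L ^ 2 * C₁ + C₂) * ρ ^ t * α ^ (2 - t)) := by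
        rw [← ENNReal.ofReal_add (by positivity) (by positivity)]
        ring_nf
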